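/- With M and P as in the Murphy–Golub–Wathen setting, the preconditioned matrix T = P⁻¹M satisfies the polynomial identity (T − I)(T² − T − I) = 0; consequently any Krylov method with exact Schur complement converges in at most 3 iterations. -/

import Mathlib

/-! Since `P` is block diagonal, `T = P⁻¹M = [[I, X], [Y, 0]]` with `X = A⁻¹B`, `Y = S⁻¹Bᵀ`, and
`YX = S⁻¹S = I`; here `S` is invertible, being positive definite as a congruence `Bᵀ A⁻¹ B` of
the positive definite `A⁻¹` by the injective `B`. For any such block matrix
`T - I = [[0, X], [Y, -I]]` and `T² - T - I = [[XY - I, 0], [0, 0]]`, whose product is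
`[[0, 0], [Y(XY - I), 0]] = 0`. -/

open Matrix

namespace Matrix

theorem mulVec_injective_of_rank_eq_card {K m n : Type*} [Field K] [Fintype n]
    (B : Matrix m n K) (hB : B.rank = Fintype.card n) : Function.Injective B.mulVec := by
  have h := LinearMap.finrank_range_add_finrank_ker B.mulVecLin
  rw [← rank, hB, Module.finrank_fintype_fun_eq_card, add_eq_left,
    Submodule.finrank_eq_zero, LinearMap.ker_eq_bot] at h
  exact h

theorem sub_one_mul_sq_sub_sub_one_fromBlocks_one_zero {R m n : Type*} [Ring R] [Fintype m]
    [Fintype n] [DecidableEq m] [DecidableEq n] (X : Matrix n m R) (Y : Matrix m n R)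
    (hYX : Y * X = 1) :
    (fromBlocks 1 X Y 0 - 1) * (fromBlocks 1 X Y 0 ^ 2 - fromBlocks 1 X Y 0 - 1) = 0 := by
  have hsub : fromBlocks 1 X Y 0 - 1 = fromBlocks (0 : Matrix n n R) X Y (-1) := by
    rw [← fromBlocks_one, sub_eq_add_neg, fromBlocks_neg, fromBlocks_add]; simp
  have hpoly : fromBlocks 1 X Y 0 ^ 2 - fromBlocks 1 X Y 0 - 1 =
      fromBlocks (X * Y - 1) 0 0 (0 : Matrix m m R) := by
    rw [sq, fromBlocks_multiply, ← fromBlocks_one, sub_sub, fromBlocks_add, sub_eq_add_neg,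
      fromBlocks_neg, fromBlocks_add, hYX]
    simp only [Matrix.mul_one, Matrix.one_mul, Matrix.mul_zero, Matrix.zero_mul, add_zero, zero_add]
    congr 1 <;> abel
  rw [hsub, hpoly, fromBlocks_multiply]
  simp [Matrix.mul_sub, ← Matrix.mul_assoc, hYX]

theorem inv_fromBlocks_diag_mul_fromBlocks {R m n : Type*} [CommRing R] [Fintype m] [Fintype n]
    [DecidableEq m] [DecidableEq n] {A : Matrix n n R} {D : Matrix m m R} (hA : IsUnit A.det)
    (hD : IsUnit D.det) (B : Matrix n m R) (C : Matrix m n R) :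
    (fromBlocks A 0 0 D)⁻¹ * fromBlocks A B C 0 = fromBlocks 1 (A⁻¹ * B) (D⁻¹ * C) 0 := by
  rw [inv_fromBlocks_zero₂₁_of_isUnit_iff A 0 D (by simp only [isUnit_iff_isUnit_det, hA, hD]),
    fromBlocks_multiply]
  simp [nonsing_inv_mul A hA]

end Matrix

theorem mgw_polynomial {n m : ℕ}
    (A : Matrix (Fin n) (Fin n) ℝ) (B : Matrix (Fin n) (Fin m) ℝ)
    (hA : A.PosDef) (hB : B.rank = m)
    (M P T : Matrix (Fin n ⊕ Fin m) (Fin n ⊕ Fin m) ℝ)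
    (hM : M = Matrix.fromBlocks A B Bᵀ 0)
    (hP : P = Matrix.fromBlocks A 0 0 (Bᵀ * A⁻¹ * B))
    (hT : T = P⁻¹ * M) :
    (T - 1) * (T ^ 2 - T - 1) = 0 := by
  set S := Bᵀ * A⁻¹ * B
  have hS : S.PosDef := by
    simpa only [conjTranspose_eq_transpose_of_trivial] using hA.inv.conjTranspose_mul_mul_same
      (B.mulVec_injective_of_rank_eq_card (by simpa using hB))
  have hYX : S⁻¹ * Bᵀ * (A⁻¹ * B) = 1 := by
    rw [Matrix.mul_assoc, ← Matrix.mul_assoc Bᵀ, nonsing_inv_mul S hS.det_pos.ne'.isUnit]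
  rw [hT, hP, hM, inv_fromBlocks_diag_mul_fromBlocks hA.det_pos.ne'.isUnit
    hS.det_pos.ne'.isUnit]
  exact sub_one_mul_sq_sub_sub_one_fromBlocks_one_zero _ _ hYX
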